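/- G(FOC+J) is a conservative extension of first-order classical logic: if Γ ∪ Δ ⊆ Form_C and Γ ⇒ Δ is derivable in G(FOC+J), then Γ ⇒ Δ is derivable in the classical sequent calculus LK. -/

import Mathlib

/-- Terms: variables (named by naturals) and constant symbols. -/
inductive Tm : Type
| var : ℕ → Tm
| const : ℕ → Tm
deriving DecidableEq

/-- Formulas of the combined language: atoms, ⊥, ∧, ∨, intuitionistic and
classical implication, intuitionistic and classical universal quantifier,
and the existential quantifier. -/
inductive Fm : Type
| atom : ℕ → List Tm → Fm
| bot : Fm
| and : Fm → Fm → Fm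
| or : Fm → Fm → Fm
| impI : Fm → Fm → Fm
| impC : Fm → Fm → Fm
| allI : ℕ → Fm → Fm
| allC : ℕ → Fm → Fm
| ex : ℕ → Fm → Fm
deriving DecidableEq

def Fm.top : Fm := .impI .bot .bot
def Fm.negC (A : Fm) : Fm := .impC A .bot
def Fm.negI (A : Fm) : Fm := .impI A .bot

def Tm.fv : Tm → Set ℕ
| .var x => {x}
| .const _ => ∅

/-- Free variables of a formula. -/
def Fm.fv : Fm → Set ℕ
| .atom _ ts => {x | ∃ t ∈ ts, x ∈ t.fv}
| .bot => ∅
| .and A B => A.fv ∪ B.fv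
| .or A B => A.fv ∪ B.fv
| .impI A B => A.fv ∪ B.fv
| .impC A B => A.fv ∪ B.fv
| .allI x A => A.fv \ {x}
| .allC x A => A.fv \ {x}
| .ex x A => A.fv \ {x}

/-- Bound variables of a formula. -/
def Fm.bv : Fm → Set ℕ
| .atom _ _ => ∅
| .bot => ∅
| .and A B => A.bv ∪ B.bv
| .or A B => A.bv ∪ B.bv
| .impI A B => A.bv ∪ B.bv
| .impC A B => A.bv ∪ B.bv
| .allI x A => insert x A.bv
| .allC x A => insert x A.bv
| .ex x A => insert x A.bv

/-- All variables (free and bound) of a formula. -/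
def Fm.vars : Fm → Set ℕ
| .atom _ ts => {x | ∃ t ∈ ts, x ∈ t.fv}
| .bot => ∅
| .and A B => A.vars ∪ B.vars
| .or A B => A.vars ∪ B.vars
| .impI A B => A.vars ∪ B.vars
| .impC A B => A.vars ∪ B.vars
| .allI x A => insert x A.vars
| .allC x A => insert x A.vars
| .ex x A => insert x A.vars

def Tm.subst (x : ℕ) (u : Tm) : Tm → Tm
| .var y => if y = x then u else .var y
| .const c => .const c

/-- Substitution of term `u` for variable `x` (under the standing assumption
that bound and free variables are disjoint, this is clash-avoiding). -/
def Fm.subst : Fm → ℕ → Tm → Fm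
| .atom P ts, x, u => .atom P (ts.map (Tm.subst x u))
| .bot, _, _ => .bot
| .and A B, x, u => .and (A.subst x u) (B.subst x u)
| .or A B, x, u => .or (A.subst x u) (B.subst x u)
| .impI A B, x, u => .impI (A.subst x u) (B.subst x u)
| .impC A B, x, u => .impC (A.subst x u) (B.subst x u)
| .allI y A, x, u => .allI y (if y = x then A else A.subst x u)
| .allC y A, x, u => .allC y (if y = x then A else A.subst x u)
| .ex y A, x, u => .ex y (if y = x then A else A.subst x u)

/-- Persistent formulas: atoms, →ᵢ-formulas and ∀ᵢ-formulas. -/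
def Fm.Persistent : Fm → Prop
| .atom _ _ => True
| .impI _ _ => True
| .allI _ _ => True
| _ => False

/-- Purely intuitionistic formulas (no →_c, no ∀_c). -/
def Fm.IsJ : Fm → Prop
| .atom _ _ => True
| .bot => True
| .and A B => A.IsJ ∧ B.IsJ
| .or A B => A.IsJ ∧ B.IsJ
| .impI A B => A.IsJ ∧ B.IsJ
| .impC _ _ => False
| .allI _ A => A.IsJ
| .allC _ _ => False
| .ex _ A => A.IsJ

/-- Purely classical formulas (no →ᵢ, no ∀ᵢ). -/
def Fm.IsC : Fm → Prop
| .atom _ _ => True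
| .bot => True
| .and A B => A.IsC ∧ B.IsC
| .or A B => A.IsC ∧ B.IsC
| .impI _ _ => False
| .impC A B => A.IsC ∧ B.IsC
| .allI _ _ => False
| .allC _ A => A.IsC
| .ex _ A => A.IsC

/-- A raw Kripke structure for the combined first-order language. -/
structure KModel (U : Type) where
  W : Type
  R : W → W → Prop
  D : W → Set U
  cI : ℕ → U
  V : ℕ → W → Set (List U)

/-- The conditions making a raw structure an intuitionistic Kripke model:
`R` is a preorder, domains are nonempty, monotone, with nonempty
intersection, constants are rigid (interpreted in every domain), and the
predicate valuation is monotone (hereditary) along `R`. -/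
structure KModel.IsKripke {U : Type} (M : KModel U) : Prop where
  wNonempty : Nonempty M.W
  refl : ∀ w, M.R w w
  trans : ∀ {w v u}, M.R w v → M.R v u → M.R w u
  dNonempty : ∀ w, (M.D w).Nonempty
  dMono : ∀ {w v}, M.R w v → M.D w ⊆ M.D v
  dInter : (⋂ w, M.D w).Nonempty
  cMem : ∀ c w, M.cI c ∈ M.D w
  vMono : ∀ P {w v}, M.R w v → M.V P w ⊆ M.V P v

def Tm.val {U : Type} (M : KModel U) (g : ℕ → U) : Tm → U
| .var x => g x
| .const c => M.cI c

/-- Satisfaction of a formula at a world under an assignment. -/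
def Fm.Sat {U : Type} (M : KModel U) : Fm → M.W → (ℕ → U) → Prop
| .atom P ts, w, g => ts.map (Tm.val M g) ∈ M.V P w
| .bot, _, _ => False
| .and A B, w, g => A.Sat M w g ∧ B.Sat M w g
| .or A B, w, g => A.Sat M w g ∨ B.Sat M w g
| .impI A B, w, g => ∀ v, M.R w v → A.Sat M v g → B.Sat M v g
| .impC A B, w, g => A.Sat M w g → B.Sat M w g
| .allI x A, w, g => ∀ v, M.R w v → ∀ d ∈ M.D v, A.Sat M v (Function.update g x d)
| .allC x A, w, g => ∀ d ∈ M.D w, A.Sat M w (Function.update g x d)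
| .ex x A, w, g => ∃ d ∈ M.D w, A.Sat M w (Function.update g x d)

/-- Multi-succedent semantic consequence: at every world of every Kripke
model, under any assignment into the domain, if all of `Γ` holds then some
member of `Δ` holds. -/
def Conseq (Γ Δ : List Fm) : Prop :=
  ∀ (U : Type) (M : KModel U), M.IsKripke → ∀ (w : M.W) (g : ℕ → U),
    (∀ x, g x ∈ M.D w) → (∀ A ∈ Γ, A.Sat M w g) → ∃ B ∈ Δ, B.Sat M w g

/-- The sequent calculus G(FOC+J). -/
inductive Der : List Fm → List Fm → Prop
| id (A : Fm) : Der [A] [A]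
| botL : Der [.bot] []
| perm {Γ Γ' Δ Δ'} : Γ.Perm Γ' → Δ.Perm Δ' → Der Γ Δ → Der Γ' Δ'
| wL {Γ Δ} (A) : Der Γ Δ → Der (A :: Γ) Δ
| wR {Γ Δ} (A) : Der Γ Δ → Der Γ (A :: Δ)
| cL {Γ Δ A} : Der (A :: A :: Γ) Δ → Der (A :: Γ) Δ
| cR {Γ Δ A} : Der Γ (A :: A :: Δ) → Der Γ (A :: Δ)
| cut {Γ Δ P S A} : Der Γ (A :: Δ) → Der (A :: P) S → Der (Γ ++ P) (Δ ++ S)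
| impIR {Θ A B} : (∀ C ∈ Θ, Fm.Persistent C) →
    Der (A :: Θ) [B] → Der Θ [.impI A B]
| impIL {Γ₁ Γ₂ Δ₁ Δ₂ A B} : Der Γ₁ (A :: Δ₁) → Der (B :: Γ₂) Δ₂ →
    Der (.impI A B :: (Γ₁ ++ Γ₂)) (Δ₁ ++ Δ₂)
| impCR {Γ Δ A B} : Der (A :: Γ) (B :: Δ) → Der Γ (.impC A B :: Δ)
| impCL {Γ₁ Γ₂ Δ₁ Δ₂ A B} : Der Γ₁ (A :: Δ₁) → Der (B :: Γ₂) Δ₂ →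
    Der (.impC A B :: (Γ₁ ++ Γ₂)) (Δ₁ ++ Δ₂)
| andR {Γ Δ A B} : Der Γ (A :: Δ) → Der Γ (B :: Δ) → Der Γ (.and A B :: Δ)
| andL1 {Γ Δ A B} : Der (A :: Γ) Δ → Der (.and A B :: Γ) Δ
| andL2 {Γ Δ A B} : Der (B :: Γ) Δ → Der (.and A B :: Γ) Δ
| orR1 {Γ Δ A B} : Der Γ (A :: Δ) → Der Γ (.or A B :: Δ)
| orR2 {Γ Δ A B} : Der Γ (B :: Δ) → Der Γ (.or A B :: Δ)
| orL {Γ Δ A B} : Der (A :: Γ) Δ → Der (B :: Γ) Δ → Der (.or A B :: Γ) Δ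
| allIR {Θ x z A} : (∀ C ∈ Θ, Fm.Persistent C) →
    (∀ C ∈ Θ, z ∉ Fm.fv C) → z ∉ Fm.fv (.allI x A) → z ∉ Fm.bv A →
    Der Θ [A.subst x (.var z)] → Der Θ [.allI x A]
| allIL {Γ Δ x A} (t : Tm) : (∀ y ∈ t.fv, y ∉ Fm.bv A) →
    Der (A.subst x t :: Γ) Δ → Der (.allI x A :: Γ) Δ
| allCR {Γ Δ x z A} : (∀ C ∈ Γ, z ∉ Fm.fv C) → (∀ C ∈ Δ, z ∉ Fm.fv C) →
    z ∉ Fm.fv (.allC x A) → z ∉ Fm.bv A →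
    Der Γ (A.subst x (.var z) :: Δ) → Der Γ (.allC x A :: Δ)
| allCL {Γ Δ x A} (t : Tm) : (∀ y ∈ t.fv, y ∉ Fm.bv A) →
    Der (A.subst x t :: Γ) Δ → Der (.allC x A :: Γ) Δ
| exR {Γ Δ x A} (t : Tm) : (∀ y ∈ t.fv, y ∉ Fm.bv A) →
    Der Γ (A.subst x t :: Δ) → Der Γ (.ex x A :: Δ)
| exL {Γ Δ x z A} : (∀ C ∈ Γ, z ∉ Fm.fv C) → (∀ C ∈ Δ, z ∉ Fm.fv C) →
    z ∉ Fm.fv (.ex x A) → z ∉ Fm.bv A →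
    Der (A.subst x (.var z) :: Γ) Δ → Der (.ex x A :: Γ) Δ

/-- The classical sequent calculus LK (on the classical fragment of the
language: →_c, ∀_c, ∃, ∧, ∨, ⊥). -/
inductive DerC : List Fm → List Fm → Prop
| id (A : Fm) : DerC [A] [A]
| botL : DerC [.bot] []
| perm {Γ Γ' Δ Δ'} : Γ.Perm Γ' → Δ.Perm Δ' → DerC Γ Δ → DerC Γ' Δ'
| wL {Γ Δ} (A) : DerC Γ Δ → DerC (A :: Γ) Δ
| wR {Γ Δ} (A) : DerC Γ Δ → DerC Γ (A :: Δ)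
| cL {Γ Δ A} : DerC (A :: A :: Γ) Δ → DerC (A :: Γ) Δ
| cR {Γ Δ A} : DerC Γ (A :: A :: Δ) → DerC Γ (A :: Δ)
| cut {Γ Δ P S A} : DerC Γ (A :: Δ) → DerC (A :: P) S → DerC (Γ ++ P) (Δ ++ S)
| impCR {Γ Δ A B} : DerC (A :: Γ) (B :: Δ) → DerC Γ (.impC A B :: Δ)
| impCL {Γ₁ Γ₂ Δ₁ Δ₂ A B} : DerC Γ₁ (A :: Δ₁) → DerC (B :: Γ₂) Δ₂ →
    DerC (.impC A B :: (Γ₁ ++ Γ₂)) (Δ₁ ++ Δ₂)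
| andR {Γ Δ A B} : DerC Γ (A :: Δ) → DerC Γ (B :: Δ) → DerC Γ (.and A B :: Δ)
| andL1 {Γ Δ A B} : DerC (A :: Γ) Δ → DerC (.and A B :: Γ) Δ
| andL2 {Γ Δ A B} : DerC (B :: Γ) Δ → DerC (.and A B :: Γ) Δ
| orR1 {Γ Δ A B} : DerC Γ (A :: Δ) → DerC Γ (.or A B :: Δ)
| orR2 {Γ Δ A B} : DerC Γ (B :: Δ) → DerC Γ (.or A B :: Δ)
| orL {Γ Δ A B} : DerC (A :: Γ) Δ → DerC (B :: Γ) Δ → DerC (.or A B :: Γ) Δ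
| allCR {Γ Δ x z A} : (∀ C ∈ Γ, z ∉ Fm.fv C) → (∀ C ∈ Δ, z ∉ Fm.fv C) →
    z ∉ Fm.fv (.allC x A) → z ∉ Fm.bv A →
    DerC Γ (A.subst x (.var z) :: Δ) → DerC Γ (.allC x A :: Δ)
| allCL {Γ Δ x A} (t : Tm) : (∀ y ∈ t.fv, y ∉ Fm.bv A) →
    DerC (A.subst x t :: Γ) Δ → DerC (.allC x A :: Γ) Δ
| exR {Γ Δ x A} (t : Tm) : (∀ y ∈ t.fv, y ∉ Fm.bv A) →
    DerC Γ (A.subst x t :: Δ) → DerC Γ (.ex x A :: Δ)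
| exL {Γ Δ x z A} : (∀ C ∈ Γ, z ∉ Fm.fv C) → (∀ C ∈ Δ, z ∉ Fm.fv C) →
    z ∉ Fm.fv (.ex x A) → z ∉ Fm.bv A →
    DerC (A.subst x (.var z) :: Γ) Δ → DerC (.ex x A :: Γ) Δ

/-!
Collapse every intuitionistic connective onto its classical counterpart (`→ᵢ` to `→_c`,
`∀ᵢ` to `∀_c`). This sends each rule of G(FOC+J) to the corresponding rule of LK: the
persistence side conditions of `→ᵢR` and `∀ᵢR` are simply forgotten, and free variables,
bound variables and substitution are unaffected, so eigenvariable conditions survive.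
Classical formulas are fixed by the collapse, so a derivable classical sequent is mapped
to itself. (LK here contains cut, so no cut elimination is needed.)
-/

namespace Fm

def toC : Fm → Fm
| .atom P ts => .atom P ts
| .bot => .bot
| .and A B => .and A.toC B.toC
| .or A B => .or A.toC B.toC
| .impI A B => .impC A.toC B.toC
| .impC A B => .impC A.toC B.toC
| .allI x A => .allC x A.toC
| .allC x A => .allC x A.toC
| .ex x A => .ex x A.toC

@[simp]
theorem fv_toC (A : Fm) : A.toC.fv = A.fv := by
  induction A <;> simp [toC, fv, *]

@[simp]
theorem bv_toC (A : Fm) : A.toC.bv = A.bv := by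
  induction A <;> simp [toC, bv, *]

theorem toC_subst (A : Fm) (x : ℕ) (t : Tm) : (A.subst x t).toC = A.toC.subst x t := by
  induction A <;> simp only [toC, subst, *] <;> split <;> simp [*]

theorem toC_of_isC {A : Fm} (h : A.IsC) : A.toC = A := by
  induction A <;> simp_all [toC, IsC]

theorem map_toC_of_forall_isC {Γ : List Fm} (h : ∀ A ∈ Γ, A.IsC) : Γ.map toC = Γ :=
  (List.map_congr_left fun A hA => toC_of_isC (h A hA)).trans (List.map_id Γ)

end Fm

open Fm in
theorem Der.toDerC {Γ Δ : List Fm} (h : Der Γ Δ) : DerC (Γ.map toC) (Δ.map toC) := by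
  induction h with
  | id A => exact .id A.toC
  | botL => exact .botL
  | perm hΓ hΔ _ ih => exact .perm (hΓ.map _) (hΔ.map _) ih
  | wL A _ ih => exact .wL _ ih
  | wR A _ ih => exact .wR _ ih
  | cL _ ih => exact .cL ih
  | cR _ ih => exact .cR ih
  | cut _ _ ih₁ ih₂ => simpa using DerC.cut ih₁ ih₂
  | impIR _ _ ih => exact .impCR ih
  | impIL _ _ ih₁ ih₂ => simpa [toC] using DerC.impCL ih₁ ih₂
  | impCR _ ih => exact .impCR ih
  | impCL _ _ ih₁ ih₂ => simpa [toC] using DerC.impCL ih₁ ih₂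
  | andR _ _ ih₁ ih₂ => exact .andR ih₁ ih₂
  | andL1 _ ih => exact .andL1 ih
  | andL2 _ ih => exact .andL2 ih
  | orR1 _ ih => exact .orR1 ih
  | orR2 _ ih => exact .orR2 ih
  | orL _ _ ih₁ ih₂ => exact .orL ih₁ ih₂
  | allIR _ hΘ hA hz _ ih =>
      refine .allCR (by simpa using hΘ) (by simp) ?_ (by simpa using hz) ?_
      · simpa [fv] using hA
      · simpa [toC_subst] using ih
  | allCR hΓ hΔ hA hz _ ih =>
      refine .allCR (by simpa using hΓ) (by simpa using hΔ) ?_ (by simpa using hz) ?_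
      · simpa [fv] using hA
      · simpa [toC_subst] using ih
  | exL hΓ hΔ hA hz _ ih =>
      refine .exL (by simpa using hΓ) (by simpa using hΔ) ?_ (by simpa using hz) ?_
      · simpa [fv] using hA
      · simpa [toC_subst] using ih
  | allIL t ht _ ih => exact .allCL t (by simpa using ht) (by simpa [toC_subst] using ih)
  | allCL t ht _ ih => exact .allCL t (by simpa using ht) (by simpa [toC_subst] using ih)
  | exR t ht _ ih => exact .exR t (by simpa using ht) (by simpa [toC_subst] using ih)

/-- G(FOC+J) is conservative over first-order classical
logic: every G(FOC+J)-derivable sequent of purely classical formulas is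
derivable in LK. -/
theorem conservative_over_classical {Γ Δ : List Fm}
    (hΓ : ∀ A ∈ Γ, Fm.IsC A) (hΔ : ∀ A ∈ Δ, Fm.IsC A)
    (h : Der Γ Δ) : DerC Γ Δ := by
  simpa only [Fm.map_toC_of_forall_isC hΓ, Fm.map_toC_of_forall_isC hΔ] using h.toDerC
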